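/- Let m be a real number with 0 < m ≤ 1, let R_m(k₁, k₂) = 4·(cos²(k₁/2)·sin²(k₂/2) + sin²(k₁/2)·cos²(k₂/2))^(3/2) / (m·(sin²(k₁/2) + sin²(k₂/2))), and let C_m = {(k₁, k₂) ∈ [0, π]² : 2·cos(k₁/2)·cos(k₂/2) = m}. Then R_m(k₁, k₂) ≤ 4·√(1 − m²/4)/m for every (k₁, k₂) ∈ C_m; moreover (0, 2·arccos(m/2)) ∈ C_m and R_m(0, 2·arccos(m/2)) = 4·√(1 − m²/4)/m, so the maximum of R_m on C_m equals 4·√(1 − m²/4)/m and is attained at (0, 2·arccos(m/2)). -/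

import Mathlib

/-!
Write `cᵢ = cos(kᵢ/2)`, `sᵢ = sin(kᵢ/2)`, `A = c₁²s₂² + s₁²c₂²` and `S = s₁² + s₂²`, so that
`R_m = 4 A^{3/2} / (m S)`. On the level curve `m²/4 = c₁²c₂²`, and the Pythagorean identities give
`(1 - m²/4) - A = s₁²s₂²` and `S - A = 2 s₁²s₂²`. Hence `A ≤ 1 - m²/4` and `A ≤ S`, so
`A^{3/2} = A √A ≤ S √(1 - m²/4)`, which is the bound. At `k₁ = 0` both `A` and `S` equal
`s₂² = 1 - m²/4`, where the bound is an equality.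
-/

/-- Curvature radius `R_m(k₁,k₂)` of the level curve `{2 cos(k₁/2) cos(k₂/2) = m}`
(Proposition 8.1). -/
noncomputable def curvRadius (m k₁ k₂ : ℝ) : ℝ :=
  4 * (Real.cos (k₁ / 2) ^ 2 * Real.sin (k₂ / 2) ^ 2
        + Real.sin (k₁ / 2) ^ 2 * Real.cos (k₂ / 2) ^ 2) ^ ((3 : ℝ) / 2) /
    (m * (Real.sin (k₁ / 2) ^ 2 + Real.sin (k₂ / 2) ^ 2))

/-- The piece of the level curve `{2 cos(k₁/2) cos(k₂/2) = m}` in `[0, π]²`. -/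
def levelCurve (m : ℝ) : Set (ℝ × ℝ) :=
  {p : ℝ × ℝ | p.1 ∈ Set.Icc 0 Real.pi ∧ p.2 ∈ Set.Icc 0 Real.pi ∧
    2 * Real.cos (p.1 / 2) * Real.cos (p.2 / 2) = m}

open Real

lemma rpow_three_halves_eq_mul_sqrt {x : ℝ} (hx : 0 ≤ x) : x ^ ((3 : ℝ) / 2) = x * √x := by
  rw [show (3 : ℝ) / 2 = 1 + 1 / 2 by norm_num, rpow_add' hx (by norm_num), rpow_one,
    sqrt_eq_rpow]

lemma four_mul_rpow_three_halves_div_le {m A S M : ℝ} (hm : 0 < m) (hA : 0 ≤ A) (hAS : A ≤ S)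
    (hAM : A ≤ M) : 4 * A ^ ((3 : ℝ) / 2) / (m * S) ≤ 4 * √M / m := by
  have hS : 0 ≤ S := hA.trans hAS
  have hpow : A ^ ((3 : ℝ) / 2) ≤ √M * S := by
    rw [rpow_three_halves_eq_mul_sqrt hA, mul_comm (√M)]
    exact mul_le_mul hAS (sqrt_le_sqrt hAM) (sqrt_nonneg A) hS
  calc 4 * A ^ ((3 : ℝ) / 2) / (m * S) = 4 / m * (A ^ ((3 : ℝ) / 2) / S) := by ring
    _ ≤ 4 / m * √M := by gcongr; exact div_le_of_le_mul₀ hS (sqrt_nonneg M) hpow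
    _ = 4 * √M / m := by ring

lemma four_mul_rpow_three_halves_div_self {m M : ℝ} (hM : 0 ≤ M) :
    4 * M ^ ((3 : ℝ) / 2) / (m * M) = 4 * √M / m := by
  rcases hM.eq_or_lt with rfl | hM
  · simp
  · rw [rpow_three_halves_eq_mul_sqrt hM.le]
    field_simp

lemma one_sub_sq_cos_mul_cos_sub_eq (x y : ℝ) :
    1 - (cos x * cos y) ^ 2 - (cos x ^ 2 * sin y ^ 2 + sin x ^ 2 * cos y ^ 2) =
      sin x ^ 2 * sin y ^ 2 := by
  linear_combination -(sin y ^ 2 + cos y ^ 2) * sin_sq_add_cos_sq x - sin_sq_add_cos_sq y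

lemma sin_sq_add_sin_sq_sub_eq (x y : ℝ) :
    sin x ^ 2 + sin y ^ 2 - (cos x ^ 2 * sin y ^ 2 + sin x ^ 2 * cos y ^ 2) =
      2 * (sin x ^ 2 * sin y ^ 2) := by
  linear_combination -sin y ^ 2 * sin_sq_add_cos_sq x - sin x ^ 2 * sin_sq_add_cos_sq y

lemma curvRadius_le {m k₁ k₂ : ℝ} (hm : 0 < m) (hc : 2 * cos (k₁ / 2) * cos (k₂ / 2) = m) :
    curvRadius m k₁ k₂ ≤ 4 * √(1 - m ^ 2 / 4) / m := by
  have hM : 1 - m ^ 2 / 4 = 1 - (cos (k₁ / 2) * cos (k₂ / 2)) ^ 2 := by rw [← hc]; ring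
  have hss : 0 ≤ sin (k₁ / 2) ^ 2 * sin (k₂ / 2) ^ 2 := by positivity
  rw [hM]
  refine four_mul_rpow_three_halves_div_le hm (by positivity) ?_ ?_
  · linarith [sin_sq_add_sin_sq_sub_eq (k₁ / 2) (k₂ / 2)]
  · linarith [one_sub_sq_cos_mul_cos_sub_eq (k₁ / 2) (k₂ / 2)]

lemma curvRadius_zero_left (m k : ℝ) :
    curvRadius m 0 k = 4 * (sin (k / 2) ^ 2) ^ ((3 : ℝ) / 2) / (m * sin (k / 2) ^ 2) := by
  simp [curvRadius]

/-- The maximum of the curvature radius on the level curve is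
`4 √(1 − m²/4) / m`, attained at `(0, 2 arccos(m/2))` (Proposition 8.1). -/
theorem curvRadius_max
    (m : ℝ) (hm0 : 0 < m) (hm1 : m ≤ 1) :
    (∀ p ∈ levelCurve m, curvRadius m p.1 p.2 ≤ 4 * Real.sqrt (1 - m ^ 2 / 4) / m) ∧
    ((0 : ℝ), 2 * Real.arccos (m / 2)) ∈ levelCurve m ∧
    curvRadius m 0 (2 * Real.arccos (m / 2)) = 4 * Real.sqrt (1 - m ^ 2 / 4) / m := by
  have hhalf : 2 * arccos (m / 2) / 2 = arccos (m / 2) := by ring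
  have hcos : cos (arccos (m / 2)) = m / 2 := cos_arccos (by linarith) (by linarith)
  have hsin : sin (arccos (m / 2)) ^ 2 = 1 - m ^ 2 / 4 := by
    rw [sin_arccos, sq_sqrt (by nlinarith)]
    ring
  refine ⟨fun p hp ↦ curvRadius_le hm0 hp.2.2, ⟨⟨le_rfl, pi_nonneg⟩, ⟨mul_nonneg zero_le_two (arccos_nonneg _), ?_⟩, ?_⟩, ?_⟩
  · linarith [arccos_le_pi_div_two.2 (by positivity : 0 ≤ m / 2)]
  · simp only [zero_div, cos_zero, hhalf, hcos]
    ring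
  · rw [curvRadius_zero_left, hhalf, hsin]
    exact four_mul_rpow_three_halves_div_self (by nlinarith)
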